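/- Let F : X → Y be a branched function with transfer operator Φ. Then C_c(X) is dense in C₂(X) with respect to the norm ‖·‖₂: for every ψ ∈ C₂(X) and every ε > 0 there exists φ ∈ C_c(X) with ‖Φ(|ψ − φ|²)‖_∞^{1/2} ≤ ε. -/

import Mathlib

open Filter Topology

/-- `F` admits a system of inverse branches centered at `x`, relative to the index
function `ind`. -/
def BranchedAt {X Y : Type*} [TopologicalSpace X] [TopologicalSpace Y]
    (F : X → Y) (ind : X → ℕ) (x : X) : Prop :=
  ∃ (U : Set X) (V : Set Y) (g : Fin (ind x) → Y → X),
    IsOpen U ∧ x ∈ U ∧ IsOpen V ∧ F x ∈ V ∧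
    (∀ i, ∀ v ∈ V, g i v ∈ U) ∧
    (∀ i, ∀ v ∈ V, F (g i v) = v) ∧
    (∀ i, g i (F x) = x) ∧
    (∀ i, ContinuousWithinAt (g i) V (F x)) ∧
    (U = ⋃ i, g i '' V) ∧
    (∀ u ∈ U, ind u = Nat.card {i : Fin (ind x) // u ∈ g i '' V})

/-- `F` is a branched function with index function `ind`. -/
def IsBranched {X Y : Type*} [TopologicalSpace X] [TopologicalSpace Y]
    (F : X → Y) (ind : X → ℕ) : Prop :=
  Continuous F ∧ (∀ x, 0 < ind x) ∧ ∀ x, BranchedAt F ind x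

/-- The transfer operator applied to `|f|²`:
`Φ(|f|²)(y) = ∑_{x ∈ F⁻¹(y)} ind_F(x)·|f(x)|²`. -/
noncomputable def transferSq {X Y : Type*} (F : X → Y) (ind : X → ℕ) (f : X → ℂ) (y : Y) : ℝ :=
  ∑' x : F ⁻¹' {y}, (ind x.1 : ℝ) * ‖f x.1‖ ^ 2

/-- Membership in `C₂(X)`: `ψ ∈ C₀(X)` and `Φ(|ψ|²)` is everywhere finite and lies in
`C₀(Y)`. -/
def MemC2 {X Y : Type*} [TopologicalSpace X] [TopologicalSpace Y]
    (F : X → Y) (ind : X → ℕ) (ψ : X → ℂ) : Prop :=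
  Continuous ψ ∧ Tendsto ψ (cocompact X) (nhds 0) ∧
  (∀ y : Y, Summable fun x : F ⁻¹' {y} => (ind x.1 : ℝ) * ‖ψ x.1‖ ^ 2) ∧
  Continuous (transferSq F ind ψ) ∧
  Tendsto (transferSq F ind ψ) (cocompact Y) (nhds 0)

/-!
For compactly supported continuous `k`, the transfer `Φ k` is continuous: near `y`, `Φ k (v)`
is the finite sum of `k (g_i v)` over the inverse branches `g_i` at the finitely many points
of `F⁻¹(y) ∩ supp k`. Put `a = |ψ|²`. A bump `h` equal to `1` on a finite part of the fibre
over `y` that carries all but `δ` of `Φ a (y)` makes `Φ ((1 - h) a) = Φ a - Φ (h a)` continuous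
and `< δ` at `y`, hence near `y`, and every cut-off above `h` does at least as well. Finitely
many such neighbourhoods cover the compact set outside which `Φ a < ε²`, a single Urysohn
cut-off `H` dominates all their bumps, and `φ = H ψ` works because
`|ψ - H ψ|² ≤ (1 - H) |ψ|² ≤ |ψ|²`.
-/

open Finset

section

variable {X Y : Type*} {F : X → Y} {ind : X → ℕ}

section Transfer

noncomputable def transfer (F : X → Y) (ind : X → ℕ) (f : X → ℝ) (y : Y) : ℝ :=
  ∑' x : F ⁻¹' {y}, (ind x.1 : ℝ) * f x.1

def TransferSummable (F : X → Y) (ind : X → ℕ) (f : X → ℝ) (y : Y) : Prop :=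
  Summable fun x : F ⁻¹' {y} => (ind x.1 : ℝ) * f x.1

variable {f g : X → ℝ} {y : Y}

theorem TransferSummable.of_nonneg_of_le (hf : 0 ≤ f) (hfg : f ≤ g)
    (hg : TransferSummable F ind g y) : TransferSummable F ind f y :=
  Summable.of_nonneg_of_le (fun x => mul_nonneg (Nat.cast_nonneg _) (hf x))
    (fun x => mul_le_mul_of_nonneg_left (hfg x) (Nat.cast_nonneg _)) hg

theorem transfer_mono (hf : 0 ≤ f) (hfg : f ≤ g) (hg : TransferSummable F ind g y) :
    transfer F ind f y ≤ transfer F ind g y :=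
  Summable.tsum_le_tsum (fun x => mul_le_mul_of_nonneg_left (hfg x) (Nat.cast_nonneg _))
    (hg.of_nonneg_of_le hf hfg) hg

theorem transfer_sub (hf : TransferSummable F ind f y) (hg : TransferSummable F ind g y) :
    transfer F ind (f - g) y = transfer F ind f y - transfer F ind g y := by
  simp only [transfer, Pi.sub_apply, mul_sub]
  exact hf.tsum_sub hg

theorem transfer_eq_sum (D : Finset X) (hD : ∀ u ∈ D, F u = y)
    (hsupp : ∀ u, F u = y → f u ≠ 0 → u ∈ D) :
    transfer F ind f y = ∑ u ∈ D, (ind u : ℝ) * f u := by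
  rw [transfer, _root_.tsum_subtype (F ⁻¹' {y}) fun u => (ind u : ℝ) * f u, tsum_eq_sum (s := D)]
  · exact Finset.sum_congr rfl fun u hu => Set.indicator_of_mem (s := F ⁻¹' {y}) (hD u hu) _
  · intro u hu
    refine Set.indicator_apply_eq_zero.2 fun hFu => ?_
    by_contra h
    exact hu (hsupp u hFu (right_ne_zero_of_mul h))

end Transfer

variable [TopologicalSpace X]

theorem exists_transfer_sub_transfer_mul_lt [T2Space X] [LocallyCompactSpace X] {a : X → ℝ}
    (ha0 : 0 ≤ a) {y : Y} {δ : ℝ} (hsum : TransferSummable F ind a y)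
    (hδ : 0 < δ) : ∃ h : C(X, ℝ), HasCompactSupport h ∧ (∀ x, h x ∈ Set.Icc 0 1) ∧
      transfer F ind a y - transfer F ind (fun x => h x * a x) y < δ := by
  classical
  obtain ⟨t, ht⟩ : ∃ t : Finset (F ⁻¹' {y}),
      transfer F ind a y - δ < ∑ x ∈ t, (ind x.1 : ℝ) * a x.1 :=
    (hsum.hasSum.eventually (eventually_gt_nhds (sub_lt_self _ hδ))).exists
  obtain ⟨h, ht1, -, hc, h01⟩ := exists_continuous_one_zero_of_isCompact
    (t.image Subtype.val).finite_toSet.isCompact isClosed_empty (Set.disjoint_empty _)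
  refine ⟨h, hc, h01, ?_⟩
  have hb0 : 0 ≤ fun x => h x * a x := fun x => mul_nonneg (h01 x).1 (ha0 x)
  have hmass : ∑ x ∈ t, (ind x.1 : ℝ) * a x.1 ≤ transfer F ind (fun x => h x * a x) y := by
    refine le_of_eq_of_le (Finset.sum_congr rfl fun x hx => ?_)
      (Summable.sum_le_tsum t (fun x _ => mul_nonneg (Nat.cast_nonneg _) (hb0 x))
        (hsum.of_nonneg_of_le hb0 fun x => mul_le_of_le_one_left (ha0 x) (h01 x).2))
    simp only [ht1 (Finset.mem_image_of_mem _ hx), Pi.one_apply, one_mul]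
  linarith

variable [TopologicalSpace Y]

structure BranchChart (F : X → Y) (ind : X → ℕ) (x : X) where
  U : Set X
  V : Set Y
  g : Fin (ind x) → Y → X
  isOpen_U : IsOpen U
  mem_U : x ∈ U
  isOpen_V : IsOpen V
  mem_V : F x ∈ V
  g_mem_U : ∀ i, ∀ v ∈ V, g i v ∈ U
  apply_g : ∀ i, ∀ v ∈ V, F (g i v) = v
  g_apply_self : ∀ i, g i (F x) = x
  continuousWithinAt_g : ∀ i, ContinuousWithinAt (g i) V (F x)
  U_eq : U = ⋃ i, g i '' V
  ind_eq : ∀ u ∈ U, ind u = Nat.card {i : Fin (ind x) // u ∈ g i '' V}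

theorem BranchedAt.nonempty_branchChart {x : X} (h : BranchedAt F ind x) :
    Nonempty (BranchChart F ind x) := by
  obtain ⟨U, V, g, h₁, h₂, h₃, h₄, h₅, h₆, h₇, h₈, h₉, h₁₀⟩ := h
  exact ⟨⟨U, V, g, h₁, h₂, h₃, h₄, h₅, h₆, h₇, h₈, h₉, h₁₀⟩⟩

noncomputable def IsBranched.chart (hF : IsBranched F ind) (x : X) : BranchChart F ind x :=
  (hF.2.2 x).nonempty_branchChart.some

namespace BranchChart

variable {x : X} (c : BranchChart F ind x)

theorem exists_g_apply_eq {u : X} (hu : u ∈ c.U) : F u ∈ c.V ∧ ∃ i, c.g i (F u) = u := by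
  rw [c.U_eq] at hu
  obtain ⟨_, ⟨i, rfl⟩, w, hw, rfl⟩ := hu
  rw [c.apply_g i w hw]
  exact ⟨hw, i, rfl⟩

theorem eq_of_mem_U {u : X} (hu : u ∈ c.U) (hFu : F u = F x) : u = x := by
  obtain ⟨-, i, hi⟩ := c.exists_g_apply_eq hu
  rw [← hi, hFu, c.g_apply_self]

theorem mem_image_g_iff {u : X} (hu : F u ∈ c.V) (i : Fin (ind x)) :
    u ∈ c.g i '' c.V ↔ c.g i (F u) = u := by
  refine ⟨?_, fun h => ⟨F u, hu, h⟩⟩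
  rintro ⟨w, hw, rfl⟩
  rw [c.apply_g i w hw]

theorem ind_eq_card [DecidableEq X] {v : Y} (hv : v ∈ c.V) {u : X} (hu : u ∈ c.U)
    (hFu : F u = v) : ind u = #{i | c.g i v = u} := by
  classical
  subst hFu
  rw [c.ind_eq u hu, Nat.card_eq_fintype_card, Fintype.card_subtype]
  simp only [c.mem_image_g_iff hv]

theorem sum_image_g {v : Y} [DecidableEq X] (hv : v ∈ c.V) (k : X → ℝ) :
    ∑ u ∈ univ.image (c.g · v), (ind u : ℝ) * k u = ∑ i, k (c.g i v) := by
  rw [Finset.sum_comp]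
  refine Finset.sum_congr rfl fun u hu => ?_
  obtain ⟨i, -, rfl⟩ := Finset.mem_image.1 hu
  rw [c.ind_eq_card hv (c.g_mem_U i v hv) (c.apply_g i v hv), nsmul_eq_mul]

theorem continuousAt_g (i : Fin (ind x)) : ContinuousAt (c.g i) (F x) :=
  (c.continuousWithinAt_g i).continuousAt (c.isOpen_V.mem_nhds c.mem_V)

theorem eventually_g_mem (i : Fin (ind x)) {O : Set X} (hO : O ∈ 𝓝 x) :
    ∀ᶠ v in 𝓝 (F x), c.g i v ∈ O :=
  c.continuousAt_g i (by rwa [c.g_apply_self])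

end BranchChart

theorem transfer_eq_sum_sum_g [DecidableEq X] (c : ∀ x, BranchChart F ind x) {f : X → ℝ}
    {s : Finset X} {v : Y} (hv : ∀ x ∈ s, v ∈ (c x).V)
    (hdisj : (s : Set X).PairwiseDisjoint fun x => Set.range fun i => (c x).g i v)
    (hcover : ∀ u, F u = v → f u ≠ 0 → ∃ x ∈ s, u ∈ (c x).U) :
    transfer F ind f v = ∑ x ∈ s, ∑ i, f ((c x).g i v) := by
  let D := s.biUnion fun x => univ.image ((c x).g · v)
  have hD : ∀ u ∈ D, F u = v := by
    intro u hu
    obtain ⟨x, hx, hu⟩ := Finset.mem_biUnion.1 hu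
    obtain ⟨i, -, rfl⟩ := Finset.mem_image.1 hu
    exact (c x).apply_g i v (hv x hx)
  have hsupp : ∀ u, F u = v → f u ≠ 0 → u ∈ D := by
    intro u hFu hfu
    obtain ⟨x, hx, hu⟩ := hcover u hFu hfu
    obtain ⟨-, i, hi⟩ := (c x).exists_g_apply_eq hu
    exact Finset.mem_biUnion.2 ⟨x, hx, Finset.mem_image.2 ⟨i, Finset.mem_univ _, hFu ▸ hi⟩⟩
  have hdisj' : (s : Set X).PairwiseDisjoint fun x => univ.image ((c x).g · v) := by
    intro x hx x' hx' hne
    exact Finset.disjoint_coe.1 (by simpa using hdisj hx hx' hne)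
  rw [transfer_eq_sum D hD hsupp, Finset.sum_biUnion hdisj']
  exact Finset.sum_congr rfl fun x hx => (c x).sum_image_g (hv x hx) f

namespace IsBranched

theorem isDiscrete_preimage_singleton (hF : IsBranched F ind) (y : Y) :
    IsDiscrete (F ⁻¹' {y}) := by
  refine isDiscrete_iff_forall_mem_exists_isOpen.2 fun x hx => ?_
  let c := hF.chart x
  refine ⟨c.U, c.isOpen_U, Set.eq_singleton_iff_unique_mem.2 ⟨⟨c.mem_U, hx⟩, ?_⟩⟩
  rintro u ⟨hu, hFu⟩
  exact c.eq_of_mem_U hu (hFu.trans hx.symm)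

theorem finite_preimage_singleton_inter [T1Space Y] (hF : IsBranched F ind) {C : Set X}
    (hC : IsCompact C) (y : Y) : (F ⁻¹' {y} ∩ C).Finite :=
  (hC.inter_left (isClosed_singleton.preimage hF.1)).finite
    ((hF.isDiscrete_preimage_singleton y).mono Set.inter_subset_left)

variable [T2Space X] [T2Space Y] (hF : IsBranched F ind) {k : X → ℝ}
include hF

theorem transfer_eventuallyEq_sum_sum_g (hk : HasCompactSupport k) (y : Y) :
    ∃ s : Finset X, (∀ x ∈ s, F x = y) ∧
      transfer F ind k =ᶠ[𝓝 y] fun v => ∑ x ∈ s, ∑ i, k ((hF.chart x).g i v) := by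
  classical
  set c := hF.chart
  let s := (hF.finite_preimage_singleton_inter hk.isCompact y).toFinset
  have hs : ∀ x, x ∈ s ↔ F x = y ∧ x ∈ tsupport k := by simp [s]
  have hsy : ∀ x ∈ s, F x = y := fun x hx => ((hs x).1 hx).1
  refine ⟨s, hsy, ?_⟩
  obtain ⟨O, hO, hOdisj⟩ := s.finite_toSet.t2_separation
  let B := tsupport k \ ⋃ x ∈ s, (c x).U
  have hB : IsClosed (F '' B) :=
    ((hk.isCompact.diff (isOpen_biUnion fun x _ => (c x).isOpen_U)).image hF.1).isClosed
  have hyB : y ∉ F '' B := by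
    rintro ⟨u, ⟨hu, hU⟩, hFu⟩
    exact hU (Set.mem_biUnion ((hs u).2 ⟨hFu, hu⟩) (c u).mem_U)
  have hV : ∀ᶠ v in 𝓝 y, ∀ x ∈ s, v ∈ (c x).V :=
    (eventually_all_finset s).2 fun x hx =>
      hsy x hx ▸ (c x).isOpen_V.mem_nhds (c x).mem_V
  have hg : ∀ᶠ v in 𝓝 y, ∀ x ∈ s, ∀ i, (c x).g i v ∈ O x :=
    (eventually_all_finset s).2 fun x hx => eventually_all.2 fun i =>
      hsy x hx ▸ (c x).eventually_g_mem i ((hO x).2.mem_nhds (hO x).1)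
  filter_upwards [hV, hg, hB.isOpen_compl.mem_nhds hyB] with v hvV hvg hvB
  refine transfer_eq_sum_sum_g c hvV ?_ ?_
  · exact hOdisj.mono_on fun x hx => Set.range_subset_iff.2 (hvg x hx)
  · intro u hFu hku
    by_contra! h
    exact hvB ⟨u, ⟨subset_tsupport k hku, by simpa using h⟩, hFu⟩

theorem continuous_transfer (hkc : Continuous k) (hk : HasCompactSupport k) :
    Continuous (transfer F ind k) := by
  refine continuous_iff_continuousAt.2 fun y => ?_
  obtain ⟨s, hsy, heq⟩ := hF.transfer_eventuallyEq_sum_sum_g hk y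
  refine ContinuousAt.congr ?_ heq.symm
  refine tendsto_finsetSum s fun x hx => tendsto_finsetSum _ fun i _ => ?_
  exact hsy x hx ▸ hkc.continuousAt.comp ((hF.chart x).continuousAt_g i)

end IsBranched

section Approximation

variable [T2Space X] [LocallyCompactSpace X] [T2Space Y] {a : X → ℝ} {δ : ℝ} (ha0 : 0 ≤ a)
  (hF : IsBranched F ind) (hac : Continuous a) (hsum : ∀ v, TransferSummable F ind a v)
include ha0 hF hac hsum

theorem IsBranched.eventually_transfer_one_sub_mul_lt {y : Y}
    (hcont : ContinuousAt (transfer F ind a) y) (hδ : 0 < δ) :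
    ∃ L : Set X, IsCompact L ∧ ∀ᶠ v in 𝓝 y, ∀ h : X → ℝ, (∀ x, h x ∈ Set.Icc 0 1) →
      Set.EqOn h 1 L → transfer F ind (fun x => (1 - h x) * a x) v < δ := by
  obtain ⟨h₀, h₀c, h₀01, hby⟩ := exists_transfer_sub_transfer_mul_lt ha0 (hsum y) hδ
  let b : X → ℝ := fun x => h₀ x * a x
  have hb0 : 0 ≤ b := fun x => mul_nonneg (h₀01 x).1 (ha0 x)
  have hba : b ≤ a := fun x => mul_le_of_le_one_left (ha0 x) (h₀01 x).2
  have hbc : Continuous (transfer F ind b) :=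
    hF.continuous_transfer (h₀.continuous.mul hac) h₀c.mul_right
  refine ⟨tsupport h₀, h₀c, ?_⟩
  filter_upwards [(hcont.sub hbc.continuousAt).eventually (gt_mem_nhds hby)]
    with v hv h h01 h1
  have hh₀ : ∀ x, h₀ x ≤ h x := by
    intro x
    by_cases hx : x ∈ tsupport h₀
    · rw [h1 hx]
      exact (h₀01 x).2
    · rw [image_eq_zero_of_notMem_tsupport hx]
      exact (h01 x).1
  calc transfer F ind (fun x => (1 - h x) * a x) v
      ≤ transfer F ind (a - b) v := by
        refine transfer_mono (fun x => mul_nonneg (sub_nonneg.2 (h01 x).2) (ha0 x))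
          (fun x => ?_) ((hsum v).of_nonneg_of_le (sub_nonneg.2 hba) (sub_le_self _ hb0))
        simp only [Pi.sub_apply, b, ← one_sub_mul]
        exact mul_le_mul_of_nonneg_right (by linarith [hh₀ x]) (ha0 x)
    _ = transfer F ind a v - transfer F ind b v :=
        transfer_sub (hsum v) ((hsum v).of_nonneg_of_le hb0 hba)
    _ < δ := hv

theorem IsCompact.exists_isCompact_transfer_one_sub_mul_lt {K : Set Y} (hK : IsCompact K)
    (hcont : Continuous (transfer F ind a)) (hδ : 0 < δ) :
    ∃ L : Set X, IsCompact L ∧ ∀ h : X → ℝ, (∀ x, h x ∈ Set.Icc 0 1) → Set.EqOn h 1 L →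
      ∀ v ∈ K, transfer F ind (fun x => (1 - h x) * a x) v < δ := by
  choose L hL hLy using fun y : Y =>
    hF.eventually_transfer_one_sub_mul_lt ha0 hac hsum hcont.continuousAt hδ (y := y)
  obtain ⟨t, -, hKt⟩ := hK.elim_nhds_subcover _ fun y _ => hLy y
  refine ⟨⋃ y ∈ t, L y, t.isCompact_biUnion fun y _ => hL y, fun h h01 h1 v hv => ?_⟩
  obtain ⟨y, hy, hvy⟩ := Set.mem_iUnion₂.1 (hKt hv)
  exact hvy h h01 (h1.mono (Set.subset_biUnion_of_mem hy))

end Approximation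

end

theorem Complex.norm_sub_ofReal_mul_sq_le (z : ℂ) {t : ℝ} (ht : t ∈ Set.Icc (0 : ℝ) 1) :
    ‖z - t * z‖ ^ 2 ≤ (1 - t) * ‖z‖ ^ 2 := by
  have h : z - t * z = ((1 - t : ℝ) : ℂ) * z := by push_cast; ring
  rw [h, norm_mul, mul_pow, Complex.norm_real, Real.norm_eq_abs, sq_abs]
  have : (1 - t) ^ 2 ≤ 1 - t := by nlinarith [ht.1, ht.2]
  exact mul_le_mul_of_nonneg_right this (sq_nonneg _)

theorem cc_dense_in_c2_general {X Y : Type*}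
    [TopologicalSpace X] [T2Space X] [LocallyCompactSpace X]
    [TopologicalSpace Y] [T2Space Y]
    (F : X → Y) (ind : X → ℕ) (hF : IsBranched F ind)
    (ψ : X → ℂ) (hψ : MemC2 F ind ψ) :
    ∀ ε : ℝ, 0 < ε → ∃ φ : X → ℂ, Continuous φ ∧ HasCompactSupport φ ∧
      ∀ y : Y,
        (Summable fun x : F ⁻¹' {y} => (ind x.1 : ℝ) * ‖ψ x.1 - φ x.1‖ ^ 2) ∧
        transferSq F ind (fun x => ψ x - φ x) y ≤ ε ^ 2 := by
  intro ε hε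
  obtain ⟨hψc, -, hsum, hΦc, hΦ0⟩ := hψ
  let a : X → ℝ := fun x => ‖ψ x‖ ^ 2
  have ha0 : 0 ≤ a := fun x => sq_nonneg _
  obtain ⟨K, hK, hKc⟩ := mem_cocompact.1 (hΦ0 (Iio_mem_nhds (pow_pos hε 2)))
  have hac : Continuous a := by fun_prop
  obtain ⟨L, hL, hLK⟩ := hK.exists_isCompact_transfer_one_sub_mul_lt ha0 hF hac hsum
    hΦc (pow_pos hε 2)
  obtain ⟨H, hH1, -, hHc, hH01⟩ :=
    exists_continuous_one_zero_of_isCompact hL isClosed_empty (Set.disjoint_empty _)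
  refine ⟨fun x => (H x : ℂ) * ψ x, by fun_prop,
    (hHc.comp_left Complex.ofReal_zero).mul_right, fun v => ?_⟩
  have hle : (fun x => ‖ψ x - H x * ψ x‖ ^ 2) ≤ fun x => (1 - H x) * a x :=
    fun x => (ψ x).norm_sub_ofReal_mul_sq_le (hH01 x)
  have hle' : (fun x => (1 - H x) * a x) ≤ a :=
    fun x => mul_le_of_le_one_left (ha0 x) (sub_le_self _ (hH01 x).1)
  have hrest0 : 0 ≤ fun x => (1 - H x) * a x :=
    fun x => mul_nonneg (sub_nonneg.2 (hH01 x).2) (ha0 x)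
  have hrest := TransferSummable.of_nonneg_of_le hrest0 hle' (hsum v)
  have hdiff := TransferSummable.of_nonneg_of_le (fun x => sq_nonneg _) hle hrest
  refine ⟨hdiff, (transfer_mono (fun x => sq_nonneg _) hle hrest).trans ?_⟩
  by_cases hv : v ∈ K
  · exact (hLK H hH01 hH1 v hv).le
  · exact (transfer_mono hrest0 hle' (hsum v)).trans (hKc hv).le

/-- **Density of `C_c(X)` in `C₂(X)` (Proposition 5.5 of the paper).** For every
`ψ ∈ C₂(X)` and `ε > 0` there is `φ ∈ C_c(X)` with `‖ψ − φ‖₂ ≤ ε`, i.e.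
`Φ(|ψ − φ|²)(y) ≤ ε²` for every `y` (with all the fiber sums convergent). -/
theorem cc_dense_in_c2 {X Y : Type*}
    [TopologicalSpace X] [T2Space X] [LocallyCompactSpace X]
    [TopologicalSpace Y] [T2Space Y] [LocallyCompactSpace Y]
    (F : X → Y) (ind : X → ℕ) (hF : IsBranched F ind)
    (ψ : X → ℂ) (hψ : MemC2 F ind ψ) :
    ∀ ε : ℝ, 0 < ε → ∃ φ : X → ℂ, Continuous φ ∧ HasCompactSupport φ ∧
      ∀ y : Y,
        (Summable fun x : F ⁻¹' {y} => (ind x.1 : ℝ) * ‖ψ x.1 - φ x.1‖ ^ 2) ∧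
        transferSq F ind (fun x => ψ x - φ x) y ≤ ε ^ 2 :=
  cc_dense_in_c2_general F ind hF ψ hψ
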